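/- Let Γ be a connected finite simplicial graph and let H be a malnormal proper subgroup of the right-angled Coxeter group G_Γ. Then for every vertex s of Γ and every g ∈ G_Γ, the element gsg⁻¹ does not belong to H. -/

import Mathlib

/-!
If `x = g s g⁻¹` lies in `H` and `t` is adjacent to `s`, then `y = g t g⁻¹` commutes with the
nontrivial element `x`, so `y⁻¹ x y = x ∈ H` and malnormality forces `y ∈ H`. By connectedness
every `g v g⁻¹` lies in `H`; these generate `g G g⁻¹ = G`, contradicting properness.
-/

open scoped Pointwise ENNReal

namespace RACGPaper

/-- The defining relations of the right-angled Coxeter group of a simple graph. -/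
def racgRels {V : Type*} (Γ : SimpleGraph V) : Set (FreeGroup V) :=
  {r | (∃ v : V, r = FreeGroup.of v * FreeGroup.of v) ∨
       (∃ v w : V, Γ.Adj v w ∧ r = (FreeGroup.of v * FreeGroup.of w) ^ 2)}

/-- The right-angled Coxeter group of a simple graph. -/
def RACG {V : Type*} (Γ : SimpleGraph V) : Type _ := PresentedGroup (racgRels Γ)

instance {V : Type*} (Γ : SimpleGraph V) : Group (RACG Γ) :=
  inferInstanceAs (Group (PresentedGroup (racgRels Γ)))

/-- The generator of `RACG Γ` corresponding to a vertex. -/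
def gen {V : Type*} (Γ : SimpleGraph V) (v : V) : RACG Γ := PresentedGroup.of v

/-- Word length with respect to the vertex generators (which are involutions). -/
noncomputable def len {V : Type*} (Γ : SimpleGraph V) (g : RACG Γ) : ℕ :=
  sInf {n | ∃ l : List V, l.length = n ∧ (l.map (gen Γ)).prod = g}

/-- The word metric on `RACG Γ`. -/
noncomputable def wdist {V : Type*} (Γ : SimpleGraph V) (g h : RACG Γ) : ℕ :=
  len Γ (g⁻¹ * h)

/-- Distance from a point to a subgroup. -/
noncomputable def distH {V : Type*} (Γ : SimpleGraph V) (H : Subgroup (RACG Γ))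
    (x : RACG Γ) : ℕ :=
  sInf {n | ∃ h ∈ H, wdist Γ x h = n}

/-- A `(K, C)`-quasi-geodesic defined on the integer interval `[a, b]`. -/
def IsQuasiGeodesic {V : Type*} (Γ : SimpleGraph V) (K C : ℝ) (a b : ℤ)
    (γ : ℤ → RACG Γ) : Prop :=
  ∀ i ∈ Set.Icc a b, ∀ j ∈ Set.Icc a b,
    |(i : ℝ) - (j : ℝ)| / K - C ≤ (wdist Γ (γ i) (γ j) : ℝ) ∧
    (wdist Γ (γ i) (γ j) : ℝ) ≤ K * |(i : ℝ) - (j : ℝ)| + C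

/-- A subgroup is strongly quasiconvex if every quasi-geodesic with endpoints on it
stays uniformly close to it. -/
def StronglyQuasiconvex {V : Type*} (Γ : SimpleGraph V) (H : Subgroup (RACG Γ)) : Prop :=
  ∀ K C : ℝ, 1 ≤ K → 0 ≤ C → ∃ M : ℝ, 0 ≤ M ∧
    ∀ (a b : ℤ) (γ : ℤ → RACG Γ), IsQuasiGeodesic Γ K C a b γ →
      γ a ∈ H → γ b ∈ H → ∀ i ∈ Set.Icc a b, (distH Γ H (γ i) : ℝ) ≤ M

/-- `H` is malnormal: `gHg⁻¹ ∩ H = {1}` for every `g ∉ H`. -/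
def Malnormal {G : Type*} [Group G] (H : Subgroup G) : Prop :=
  ∀ g : G, g ∉ H → ∀ x : G, x ∈ H → g⁻¹ * x * g ∈ H → x = 1

/-- `H` is almost malnormal: `gHg⁻¹ ∩ H` is finite for every `g ∉ H`. -/
def AlmostMalnormal {G : Type*} [Group G] (H : Subgroup G) : Prop :=
  ∀ g : G, g ∉ H → {x : G | x ∈ H ∧ g⁻¹ * x * g ∈ H}.Finite

/-- An almost malnormal collection of subgroups. -/
def AlmostMalnormalColl {G : Type*} [Group G] (𝓗 : Set (Subgroup G)) : Prop :=
  ∀ H ∈ 𝓗, ∀ H' ∈ 𝓗, ∀ g : G,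
    {x : G | x ∈ H ∧ g⁻¹ * x * g ∈ (H' : Subgroup G)}.Infinite → H = H' ∧ g ∈ H

/-- A group is virtually free if it has a free subgroup of finite index. -/
def VirtuallyFree (G : Type*) [Group G] : Prop :=
  ∃ F : Subgroup G, F.FiniteIndex ∧ IsFreeGroup F

/-- A set of vertices spans a join subgraph. -/
def IsJoin {V : Type*} (Γ : SimpleGraph V) (J : Set V) : Prop :=
  ∃ V₁ V₂ : Set V, V₁.Nonempty ∧ V₂.Nonempty ∧ Disjoint V₁ V₂ ∧ V₁ ∪ V₂ = J ∧
    ∀ v ∈ V₁, ∀ w ∈ V₂, Γ.Adj v w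

/-- The special subgroup generated by a set of vertices. -/
def special {V : Type*} (Γ : SimpleGraph V) (S₁ : Set V) : Subgroup (RACG Γ) :=
  Subgroup.closure (gen Γ '' S₁)

/-- The conjugate subgroup `gHg⁻¹`. -/
def conjSubgroup {G : Type*} [Group G] (g : G) (H : Subgroup G) : Subgroup G :=
  H.map (MulAut.conj g).toMonoidHom

/-- `x` lies in some join subgroup of `RACG Γ`. -/
def InJoinSubgroup {V : Type*} (Γ : SimpleGraph V) (x : RACG Γ) : Prop :=
  ∃ J : Set V, IsJoin Γ J ∧ x ∈ special Γ J

/-- An infinite subgroup is join-free if none of its infinite-order elements is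
conjugate into a join subgroup. -/
def JoinFree {V : Type*} (Γ : SimpleGraph V) (H : Subgroup (RACG Γ)) : Prop :=
  (H : Set (RACG Γ)).Infinite ∧
    ∀ h ∈ H, ¬ IsOfFinOrder h → ∀ g : RACG Γ, ¬ InJoinSubgroup Γ (g * h * g⁻¹)

/-- The star of a vertex: the vertex together with its neighbours. -/
def starSet {V : Type*} (Γ : SimpleGraph V) (v : V) : Set V :=
  {v} ∪ {w | Γ.Adj v w}

/-- `x` lies in some star subgroup of `RACG Γ`. -/
def InStarSubgroup {V : Type*} (Γ : SimpleGraph V) (x : RACG Γ) : Prop :=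
  ∃ v : V, x ∈ special Γ (starSet Γ v)

/-- An infinite subgroup is star-free if none of its infinite-order elements is
conjugate into a star subgroup. -/
def StarFree {V : Type*} (Γ : SimpleGraph V) (H : Subgroup (RACG Γ)) : Prop :=
  (H : Set (RACG Γ)).Infinite ∧
    ∀ h ∈ H, ¬ IsOfFinOrder h → ∀ g : RACG Γ, ¬ InStarSubgroup Γ (g * h * g⁻¹)

/-- Word length with respect to a (symmetrized) set `T` of group elements. -/
noncomputable def wlen {G : Type*} [Group G] (T : Set G) (g : G) : ℕ :=
  sInf {n | ∃ l : List G, (∀ x ∈ l, x ∈ T ∨ x⁻¹ ∈ T) ∧ l.length = n ∧ l.prod = g}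

/-- A finitely generated subgroup of `RACG Γ` is undistorted if the inclusion is a
quasi-isometric embedding with respect to word metrics. -/
def Undistorted {V : Type*} (Γ : SimpleGraph V) (H : Subgroup (RACG Γ)) : Prop :=
  ∃ T : Finset (RACG Γ), (T : Set (RACG Γ)) ⊆ (H : Set (RACG Γ)) ∧
    Subgroup.closure (T : Set (RACG Γ)) = H ∧
    ∃ K C : ℝ, 1 ≤ K ∧ 0 ≤ C ∧ ∀ h ∈ H,
      (wlen (T : Set (RACG Γ)) h : ℝ) / K - C ≤ (len Γ h : ℝ) ∧
      (len Γ h : ℝ) ≤ K * (wlen (T : Set (RACG Γ)) h : ℝ) + C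

/-- A subgroup is stable if it is undistorted and quasi-geodesics with common
endpoints on it uniformly fellow-travel. -/
def Stable {V : Type*} (Γ : SimpleGraph V) (H : Subgroup (RACG Γ)) : Prop :=
  Undistorted Γ H ∧ ∀ K C : ℝ, 1 ≤ K → 0 ≤ C → ∃ M : ℝ, 0 ≤ M ∧
    ∀ (a b a' b' : ℤ) (γ γ' : ℤ → RACG Γ),
      IsQuasiGeodesic Γ K C a b γ → IsQuasiGeodesic Γ K C a' b' γ' →
      γ a = γ' a' → γ b = γ' b' → γ a ∈ H → γ b ∈ H →
      (∀ i ∈ Set.Icc a b, ∃ j ∈ Set.Icc a' b', (wdist Γ (γ i) (γ' j) : ℝ) ≤ M) ∧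
      (∀ j ∈ Set.Icc a' b', ∃ i ∈ Set.Icc a b, (wdist Γ (γ i) (γ' j) : ℝ) ≤ M)

/-- `H` is `N`-join-busting: every join subword of a reduced word representing an
element of `H` has length at most `N`. -/
def JoinBusting {V : Type*} (Γ : SimpleGraph V) (H : Subgroup (RACG Γ)) (N : ℕ) : Prop :=
  ∀ h ∈ H, ∀ w : List V, (w.map (gen Γ)).prod = h → w.length = len Γ h →
    ∀ β : List V, β <:+: w → InJoinSubgroup Γ (β.map (gen Γ)).prod → β.length ≤ N

/-- `a b c d` is an induced four-cycle (in this cyclic order), with diagonals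
`(a, c)` and `(b, d)`. -/
def IsInducedFourCycle {V : Type*} (Γ : SimpleGraph V) (a b c d : V) : Prop :=
  a ≠ c ∧ b ≠ d ∧ ¬ Γ.Adj a c ∧ ¬ Γ.Adj b d ∧
    Γ.Adj a b ∧ Γ.Adj b c ∧ Γ.Adj c d ∧ Γ.Adj d a

/-- A set of vertices is the vertex set of an induced four-cycle. -/
def IsFourCycleSet {V : Type*} (Γ : SimpleGraph V) (Q : Set V) : Prop :=
  ∃ a b c d : V, Q = {a, b, c, d} ∧ IsInducedFourCycle Γ a b c d

/-- The four-cycle graph `Γ⁴`: vertices are induced four-cycles of `Γ`, adjacent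
when they share a pair of non-adjacent vertices. -/
def fourCycleGraph {V : Type*} (Γ : SimpleGraph V) :
    SimpleGraph {Q : Set V // IsFourCycleSet Γ Q} :=
  SimpleGraph.fromRel (fun Q Q' => ∃ u v : V, u ≠ v ∧ ¬ Γ.Adj u v ∧
    u ∈ (Q : Set V) ∩ (Q' : Set V) ∧ v ∈ (Q : Set V) ∩ (Q' : Set V))

/-- A connected component of `Γ⁴` whose support is the whole vertex set of `Γ`. -/
def FullSupportComponent {V : Type*} (Γ : SimpleGraph V)
    (C : (fourCycleGraph Γ).ConnectedComponent) : Prop :=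
  ∀ v : V, ∃ Q : {Q : Set V // IsFourCycleSet Γ Q},
    (fourCycleGraph Γ).connectedComponentMk Q = C ∧ v ∈ (Q : Set V)

/-- `Γ` is CFS: some component of `Γ⁴` has full support. -/
def CFS {V : Type*} (Γ : SimpleGraph V) : Prop :=
  ∃ C : (fourCycleGraph Γ).ConnectedComponent, FullSupportComponent Γ C

/-- Length (number of edges) of a shortest edge path from `x` to `y` in the Cayley
graph all of whose vertices are at distance at least `c` from `H`. -/
noncomputable def avoidDist {V : Type*} (Γ : SimpleGraph V) (H : Subgroup (RACG Γ))
    (c : ℝ) (x y : RACG Γ) : ℝ≥0∞ :=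
  ⨅ (l : List (RACG Γ)) (_ : l.head? = some x) (_ : l.getLast? = some y)
    (_ : l.Chain' fun a b => wdist Γ a b = 1)
    (_ : ∀ z ∈ l, c ≤ (distH Γ H z : ℝ)), ((l.length - 1 : ℕ) : ℝ≥0∞)

/-- The subgroup divergence functions `σⁿ_ρ` of `H` in `RACG Γ`. -/
noncomputable def divFun {V : Type*} (Γ : SimpleGraph V) (H : Subgroup (RACG Γ))
    (ρ : ℝ) (n : ℕ) (r : ℝ) : ℝ≥0∞ :=
  ⨅ (x : RACG Γ) (y : RACG Γ) (_ : (distH Γ H x : ℝ) = r)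
    (_ : (distH Γ H y : ℝ) = r) (_ : avoidDist Γ H r x y ≠ ⊤)
    (_ : (n : ℝ) * r ≤ (wdist Γ x y : ℝ)), avoidDist Γ H (ρ * r) x y

/-- Domination of functions: `f(x) ≤ A g(Bx) + Cx` for large `x`. -/
def FunDom (f g : ℝ → ℝ≥0∞) : Prop :=
  ∃ A B C D : ℝ, 0 < A ∧ 0 < B ∧ 0 < C ∧ 0 < D ∧
    ∀ x : ℝ, D < x → f x ≤ ENNReal.ofReal A * g (B * x) + ENNReal.ofReal (C * x)

/-- Domination of families of divergence functions. -/
def FamDom (δ δ' : ℝ → ℕ → ℝ → ℝ≥0∞) : Prop :=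
  ∃ L : ℝ, L ∈ Set.Ioc (0 : ℝ) 1 ∧ ∃ M : ℕ, 0 < M ∧
    ∀ ρ ∈ Set.Ioc (0 : ℝ) 1, ∀ n : ℕ, 2 ≤ n → FunDom (δ (L * ρ) n) (δ' ρ (M * n))

/-- A family of divergence functions is equivalent to a single function. -/
def FamEquivFun (δ : ℝ → ℕ → ℝ → ℝ≥0∞) (f : ℝ → ℝ≥0∞) : Prop :=
  FamDom δ (fun _ _ => f) ∧ FamDom (fun _ _ => f) δ

/-- Height at most `n`: any `n+1` pairwise distinct cosets give conjugates with
finite total intersection. -/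
def HeightAtMost {G : Type*} [Group G] (H : Subgroup G) (n : ℕ) : Prop :=
  ∀ f : Fin (n + 1) → G, (∀ i j, i ≠ j → (f i)⁻¹ * f j ∉ H) →
    {x : G | ∀ i, (f i)⁻¹ * x * f i ∈ H}.Finite

/-- `H` has finite height in `G`. -/
def FiniteHeight {G : Type*} [Group G] (H : Subgroup G) : Prop :=
  ∃ n : ℕ, HeightAtMost H n

theorem _root_.SimpleGraph.Reachable.induction_on_adj {V : Type*} {G : SimpleGraph V}
    {P : V → Prop} (hP : ∀ ⦃v w⦄, G.Adj v w → P v → P w) {u v : V} (h : G.Reachable u v) (hu : P u) :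
    P v := by
  rw [SimpleGraph.reachable_iff_reflTransGen] at h
  induction h with
  | refl => exact hu
  | tail _ hadj ih => exact hP hadj ih

theorem Malnormal.mem_of_commute {G : Type*} [Group G] {H : Subgroup G} (hH : Malnormal H)
    {x y : G} (hx : x ∈ H) (hx1 : x ≠ 1) (hxy : Commute x y) : y ∈ H := by
  by_contra hy
  refine hx1 (hH y hy x hx ?_)
  rwa [mul_assoc, hxy.eq, inv_mul_cancel_left]

section RACG

variable {V : Type*} (Γ : SimpleGraph V)

theorem gen_mul_self (v : V) : gen Γ v * gen Γ v = 1 := by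
  have := PresentedGroup.one_of_mem (rels := racgRels Γ) (Or.inl ⟨v, rfl⟩)
  rwa [map_mul] at this

theorem gen_inv (v : V) : (gen Γ v)⁻¹ = gen Γ v :=
  inv_eq_of_mul_eq_one_right (gen_mul_self Γ v)

theorem commute_gen_of_adj {v w : V} (h : Γ.Adj v w) : Commute (gen Γ v) (gen Γ w) := by
  have hsq : gen Γ v * gen Γ w * (gen Γ v * gen Γ w) = 1 := by
    have := PresentedGroup.one_of_mem (rels := racgRels Γ) (Or.inr ⟨v, w, h, rfl⟩)
    rwa [map_pow, map_mul, sq] at this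
  calc gen Γ v * gen Γ w = (gen Γ v * gen Γ w)⁻¹ := (inv_eq_of_mul_eq_one_right hsq).symm
    _ = gen Γ w * gen Γ v := by rw [mul_inv_rev, gen_inv, gen_inv]

def parity : RACG Γ →* Multiplicative (ZMod 2) :=
  PresentedGroup.toGroup (f := fun _ => Multiplicative.ofAdd 1) (by
    rintro r (⟨v, rfl⟩ | ⟨v, w, -, rfl⟩) <;> simp <;> decide)

theorem parity_gen (v : V) : parity Γ (gen Γ v) = Multiplicative.ofAdd 1 :=
  PresentedGroup.toGroup.of _

theorem gen_ne_one (v : V) : gen Γ v ≠ 1 := fun h => by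
  simpa [parity_gen] using congrArg (parity Γ) h

variable {Γ} in
theorem eq_top_of_conj_gen_mem {H : Subgroup (RACG Γ)}
    (g : RACG Γ) (h : ∀ v, g * gen Γ v * g⁻¹ ∈ H) : H = ⊤ := by
  refine eq_top_iff.2 fun x _ => ?_
  have hx : g * (g⁻¹ * x * g) * g⁻¹ ∈ H :=
    PresentedGroup.generated_by _ (H.comap (MulAut.conj g).toMonoidHom) h _
  simpa only [mul_assoc, mul_inv_cancel_left, mul_inv_cancel, mul_one] using hx

end RACG

end RACGPaper

open RACGPaper in
theorem conj_gen_not_mem_malnormal_general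
    {V : Type*} (Γ : SimpleGraph V) (hconn : Γ.Connected)
    (H : Subgroup (RACG Γ)) (hproper : H ≠ ⊤) (hmal : Malnormal H) :
    ∀ (s : V) (g : RACG Γ), g * gen Γ s * g⁻¹ ∉ H := by
  intro s g hs
  have step : ∀ ⦃v w⦄, Γ.Adj v w → g * gen Γ v * g⁻¹ ∈ H → g * gen Γ w * g⁻¹ ∈ H :=
    fun v w hvw hv => hmal.mem_of_commute hv (mt conj_eq_one_iff.1 (gen_ne_one Γ v))
      ((commute_gen_of_adj Γ hvw).map (MulAut.conj g))
  exact hproper <| eq_top_of_conj_gen_mem g fun v =>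
    (hconn.preconnected s v).induction_on_adj step hs

open RACGPaper in
/-- no conjugate of a vertex generator belongs to a proper malnormal
subgroup of a RACG with connected defining graph. -/
theorem conj_gen_not_mem_malnormal
    {V : Type*} [Fintype V] (Γ : SimpleGraph V) (hconn : Γ.Connected)
    (H : Subgroup (RACG Γ)) (hproper : H ≠ ⊤) (hmal : Malnormal H) :
    ∀ (s : V) (g : RACG Γ), g * gen Γ s * g⁻¹ ∉ H :=
  conj_gen_not_mem_malnormal_general Γ hconn H hproper hmal
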